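/- arXiv:1610.02645 — 2 statements merged into one kernel-verified Lean document; each statement's English description precedes it below -/
import Mathlib

section
/- Let K = 𝔽₂((t)) be the field of formal Laurent series over 𝔽₂ and ℘(x) = x² − x. The cosets t^{−(2n+1)} + ℘(K) for n = 0, 1, 2, … are pairwise distinct in K/℘(K). In particular the subgroup ℘(K) has infinite index in (K, +). -/
/-!
In characteristic `2` one has `(x ^ 2).coeff (2 * k) = x.coeff k ^ 2`, and `x ^ 2` has no odd
coefficients. So if `y = x ^ 2 - x` vanishes at `2 * m, 4 * m, 8 * m, …` for an odd `m < 0`, then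
`x.coeff (2 ^ j * m) = (-y.coeff m) ^ (2 ^ j)`; since `2 ^ j * m → -∞` and the support of `x` is
bounded below, these coefficients eventually vanish, forcing `y.coeff m = 0`. The difference
`t ^ (-b) - t ^ (-a)` of two distinct odd negative powers has coefficient `-1` at `-a` and none at
even exponents, hence does not lie in `℘(K)`.
-/

open Finset

namespace HahnSeries

section Square

variable {Γ R : Type*} [AddCommMonoid Γ] [CommSemiring R] [CharP R 2]

theorem coeff_mul_self_eq_sum_diag [PartialOrder Γ] [DecidableEq Γ] [IsOrderedCancelAddMonoid Γ]
    (x : HahnSeries Γ R) (g : Γ) :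
    (x * x).coeff g = ∑ p ∈ (antidiagonal x.isPWO_support x.isPWO_support g).filter
      (fun p => p.1 = p.2), x.coeff p.1 * x.coeff p.2 := by
  rw [coeff_mul, ← sum_filter_add_sum_filter_not _ (fun p => p.1 = p.2)]
  convert add_zero _
  -- the off-diagonal terms cancel in pairs `(i, j) ↔ (j, i)`
  refine sum_involution (fun p _ => p.swap) (fun p _ => ?_) (fun p hp _ => ?_) (fun p hp => ?_)
    (fun p _ => p.swap_swap)
  · simp only [Prod.fst_swap, Prod.snd_swap, mul_comm (x.coeff p.2), CharTwo.add_self_eq_zero]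
  · exact fun h => (mem_filter.mp hp).2 (congrArg Prod.fst h).symm
  · simp only [mem_filter, swap_mem_antidiagonal, Prod.fst_swap, Prod.snd_swap] at hp ⊢
    exact ⟨hp.1, Ne.symm hp.2⟩

theorem coeff_mul_self_eq_zero [PartialOrder Γ] [IsOrderedCancelAddMonoid Γ]
    (x : HahnSeries Γ R) {g : Γ} (hg : ∀ i, i + i ≠ g) : (x * x).coeff g = 0 := by
  classical
  rw [coeff_mul_self_eq_sum_diag]
  refine sum_eq_zero fun p hp => ?_
  simp only [mem_filter, Finset.mem_antidiagonal] at hp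
  exact absurd (hp.2 ▸ hp.1.2.2) (hg p.1)

theorem coeff_mul_self_add_self [LinearOrder Γ] [IsOrderedCancelAddMonoid Γ]
    (x : HahnSeries Γ R) (i : Γ) : (x * x).coeff (i + i) = x.coeff i ^ 2 := by
  classical
  have hdouble : StrictMono fun j : Γ => j + j := strictMono_id.add strictMono_id
  rw [coeff_mul_self_eq_sum_diag, sq, sum_eq_single (i, i)]
  · intro p hp hne
    simp only [mem_filter, Finset.mem_antidiagonal] at hp
    obtain ⟨⟨-, -, hsum⟩, hdiag⟩ := hp
    rw [← hdiag] at hsum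
    exact absurd (Prod.ext (hdouble.injective hsum) (hdiag ▸ hdouble.injective hsum)) hne
  · intro hi
    by_contra hne
    exact hi (mem_filter.mpr ⟨Finset.mem_antidiagonal.mpr
      ⟨left_ne_zero_of_mul hne, right_ne_zero_of_mul hne, rfl⟩, rfl⟩)

end Square

theorem exists_coeff_two_pow_mul_eq_zero {R : Type*} [Zero R] (x : HahnSeries ℤ R) {m : ℤ}
    (hm : m < 0) : ∃ j : ℕ, x.coeff (2 ^ j * m) = 0 := by
  refine ⟨x.order.natAbs, coeff_eq_zero_of_lt_order ?_⟩
  have hlt : (x.order.natAbs : ℤ) < 2 ^ x.order.natAbs := by exact_mod_cast Nat.lt_two_pow_self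
  have hm1 : m ≤ -1 := by omega
  have habs : -x.order ≤ x.order.natAbs := by omega
  nlinarith

section ArtinSchreier

variable {R : Type*} [CommRing R] [IsReduced R] [CharP R 2]

theorem coeff_sq_sub_self_eq_zero_of_odd (x : LaurentSeries R) {m : ℤ} (hm : Odd m) (hm0 : m < 0)
    (h : ∀ j : ℕ, (x ^ 2 - x).coeff (2 ^ (j + 1) * m) = 0) : (x ^ 2 - x).coeff m = 0 := by
  have hodd : (x ^ 2 - x).coeff m = -x.coeff m := by
    obtain ⟨k, rfl⟩ := hm
    rw [coeff_sub, sq, coeff_mul_self_eq_zero x (fun i => by omega), zero_sub]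
  have hpow : ∀ j : ℕ, x.coeff (2 ^ j * m) = x.coeff m ^ 2 ^ j := by
    intro j
    induction j with
    | zero => simp
    | succ j ih =>
      have hj := h j
      rw [show 2 ^ (j + 1) * m = 2 ^ j * m + 2 ^ j * m by ring, coeff_sub, sq,
        coeff_mul_self_add_self, ih, sub_eq_zero] at hj
      rw [show 2 ^ (j + 1) * m = 2 ^ j * m + 2 ^ j * m by ring, ← hj, ← pow_mul, pow_succ]
  obtain ⟨j, hj⟩ := x.exists_coeff_two_pow_mul_eq_zero hm0
  rw [hodd, neg_eq_zero]
  exact IsNilpotent.eq_zero ⟨2 ^ j, (hpow j).symm.trans hj⟩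

theorem sq_sub_self_ne_single_sub_single (x : LaurentSeries R) {m k : ℤ} (hm : Odd m)
    (hm0 : m < 0) (hk : Odd k) (hmk : m ≠ k) : x ^ 2 - x ≠ single k 1 - single m 1 := by
  have := CharP.nontrivial_of_char_ne_one (R := R) (v := 2) (by norm_num)
  intro h
  have hcoeff := x.coeff_sq_sub_self_eq_zero_of_odd hm hm0 fun j => by
    have heven : Even (2 ^ (j + 1) * m) := (Int.even_pow.mpr ⟨even_two, j.succ_ne_zero⟩).mul_right m
    rw [h, coeff_sub, coeff_single_of_ne, coeff_single_of_ne, sub_zero]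
    · exact fun hj => Int.not_even_iff_odd.mpr hm (hj ▸ heven)
    · exact fun hj => Int.not_even_iff_odd.mpr hk (hj ▸ heven)
  rw [h, coeff_sub, coeff_single_of_ne hmk, coeff_single_same, zero_sub, neg_eq_zero] at hcoeff
  exact one_ne_zero hcoeff

end ArtinSchreier

end HahnSeries

/-- Let `K = 𝔽₂((t))` and `℘(x) = x² − x`. The cosets `t^{-(2n+1)} + ℘(K)`,
`n = 0, 1, 2, …`, are pairwise distinct in `K/℘(K)`; in particular `℘(K)` has
infinite index (index `0` in Mathlib's convention) in `(K, +)`. -/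
theorem stmt4 (℘ : LaurentSeries (ZMod 2) →+ LaurentSeries (ZMod 2))
    (h℘ : ∀ x, ℘ x = x ^ 2 - x) :
    (Function.Injective fun n : ℕ =>
      (QuotientAddGroup.mk ((HahnSeries.single (1 : ℤ) (1 : ZMod 2)) ^ (-(2 * (n : ℤ) + 1))) :
        LaurentSeries (ZMod 2) ⧸ ℘.range)) ∧
    ℘.range.index = 0 := by
  have hinj : Function.Injective fun n : ℕ =>
      (QuotientAddGroup.mk ((HahnSeries.single (1 : ℤ) (1 : ZMod 2)) ^ (-(2 * (n : ℤ) + 1))) :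
        LaurentSeries (ZMod 2) ⧸ ℘.range) := by
    intro n n' h
    simp only [← RatFunc.single_zpow] at h
    obtain ⟨x, hx⟩ := QuotientAddGroup.eq.mp h
    rw [h℘, neg_add_eq_sub] at hx
    by_contra hne
    exact x.sq_sub_self_ne_single_sub_single (by simp [parity_simps]) (by omega)
      (by simp [parity_simps]) (by omega) hx
  exact ⟨hinj, AddSubgroup.index_eq_zero_iff_infinite.mpr (Infinite.of_injective _ hinj)⟩
end

section
/- In the Laurent series field 𝔽_q((t)) over a finite field of characteristic 2, let n ≥ 0, let i ≥ 1 be an integer, θ ∈ 𝔽_q, u ∈ 𝔽_q, and set α = 1 + θ t^i. Then the coefficient of t^{−1} in u t^{−(2n+1)} · α⁻¹ · (dα/dt) equals 0 if i does not divide 2n+1, and equals u · θ^{(2n+1)/i} if i divides 2n+1 and (2n+1)/i is odd (which it always is). -/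
/-- The formal derivative of a Laurent series: `(df/dt).coeff k = (k+1) • f.coeff (k+1)`. -/
noncomputable def lderiv {F : Type*} [Field F] (f : LaurentSeries F) : LaurentSeries F where
  coeff k := (k + 1) • f.coeff (k + 1)
  isPWO_support' := by
    refine ((f.isPWO_support.image_of_monotone (f := fun k : ℤ => k - 1)
      (fun a b hab => by simpa using hab)).mono ?_)
    intro k hk
    have h : f.coeff (k + 1) ≠ 0 := fun h0 => hk (by simp [Function.mem_support, h0])
    exact ⟨k + 1, h, by ring⟩

/-- The formal residue: the coefficient of `t⁻¹`. -/
noncomputable def lres {F : Type*} [Field F] (f : LaurentSeries F) : F := f.coeff (-1)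

/-! In any field, `(1 + r tᵃ)⁻¹ = ∑ⱼ (-r)ʲ t^{ja}` for `a > 0` (the geometric series), and
`d(1 + θ tⁱ)/dt = iθ t^{i-1}`. Hence the residue is `u · iθ` times the coefficient of `t^{2n+1-i}`
in `α⁻¹`, which is `(-θ)^{(2n+1)/i - 1}` if `i ∣ 2n+1` and `0` otherwise. In characteristic 2,
`-θ = θ`, and `iθ` is `θ` for odd `i` and `0` for even `i`; an even `i` never divides `2n+1`. -/

open HahnSeries

section LaurentDerivative

variable {F : Type*} [Field F]

theorem coeff_lderiv (f : LaurentSeries F) (k : ℤ) :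
    (lderiv f).coeff k = (k + 1) • f.coeff (k + 1) := rfl

theorem lderiv_add (f g : LaurentSeries F) : lderiv (f + g) = lderiv f + lderiv g := by
  ext k
  simp only [coeff_lderiv, coeff_add, smul_add]

theorem lderiv_single (a : ℤ) (r : F) : lderiv (single a r) = single (a - 1) (a • r) := by
  ext k
  rw [coeff_lderiv, coeff_single, coeff_single]
  by_cases h : k = a - 1
  · rw [if_pos (by omega), if_pos h, h, sub_add_cancel]
  · rw [if_neg (by omega), if_neg h, smul_zero]

theorem lderiv_one : lderiv (1 : LaurentSeries F) = 0 := by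
  rw [← single_zero_one, lderiv_single, zero_smul, single_eq_zero]

theorem lres_single_mul (a : ℤ) (r : F) (f : LaurentSeries F) :
    lres (single a r * f) = r * f.coeff (-1 - a) := by
  rw [lres, ← coeff_single_mul_add, sub_add_cancel]

end LaurentDerivative

section GeometricSeries

variable {Γ F : Type*} [AddCommGroup Γ] [LinearOrder Γ] [IsOrderedAddMonoid Γ] [Field F]

theorem orderTop_single_pos {a : Γ} (ha : 0 < a) (r : F) : 0 < (single a r).orderTop := by
  by_cases hr : r = 0
  · simp [hr]
  · rw [orderTop_single hr]
    exact_mod_cast ha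

theorem inv_one_add_single_eq_hsum_powers {a : Γ} (ha : 0 < a) (r : F) :
    (1 + single a r)⁻¹ = (SummableFamily.powers (single a (-r))).hsum := by
  refine inv_eq_of_mul_eq_one_right ?_
  simpa only [single_neg, sub_neg_eq_add] using
    SummableFamily.one_sub_self_mul_hsum_powers (orderTop_single_pos ha (-r))

theorem coeff_inv_one_add_single (a : Γ) (ha : 0 < a) (r : F) (g : Γ) :
    ((1 + single a r)⁻¹).coeff g = ∑ᶠ j : ℕ, (single (j • a) ((-r) ^ j)).coeff g := by
  simp only [inv_one_add_single_eq_hsum_powers ha, SummableFamily.coeff_hsum,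
    SummableFamily.coe_powers (orderTop_single_pos ha (-r)), single_pow]

theorem coeff_inv_one_add_single_nsmul {a : Γ} (ha : 0 < a) (r : F) (n : ℕ) :
    ((1 + single a r)⁻¹).coeff (n • a) = (-r) ^ n := by
  rw [coeff_inv_one_add_single a ha, finsum_eq_single _ n]
  · exact coeff_single_same _ _
  · intro j hj
    exact coeff_single_of_ne ((nsmul_left_strictMono ha).injective.ne hj).symm

theorem coeff_inv_one_add_single_eq_zero {a : Γ} (ha : 0 < a) (r : F) {g : Γ}
    (hg : ∀ n : ℕ, n • a ≠ g) : ((1 + single a r)⁻¹).coeff g = 0 := by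
  rw [coeff_inv_one_add_single a ha]
  exact finsum_eq_zero_of_forall_eq_zero fun j => coeff_single_of_ne (hg j).symm

end GeometricSeries

theorem lres_single_mul_inv_mul_lderiv {F : Type*} [Field F] (m i : ℤ) (u θ : F) :
    lres (single (-m) u * (1 + single i θ)⁻¹ * lderiv (1 + single i θ)) =
      u * (i • θ) * ((1 + single i θ : LaurentSeries F)⁻¹).coeff (m - i) := by
  rw [lderiv_add, lderiv_one, zero_add, lderiv_single, mul_right_comm, single_mul_single,
    lres_single_mul]
  ring_nf

theorem stmt17_general {F : Type*} [Field F] (hF : CharP F 2)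
    (n : ℕ) (i : ℕ) (hi : 1 ≤ i) (θ u : F) :
    (¬ (i ∣ 2 * n + 1) →
      lres ((HahnSeries.single (-(2 * (n : ℤ) + 1)) u : LaurentSeries F) *
        (1 + HahnSeries.single (i : ℤ) θ : LaurentSeries F)⁻¹ *
        lderiv (1 + HahnSeries.single (i : ℤ) θ : LaurentSeries F)) = 0) ∧
    ((i ∣ 2 * n + 1) →
      Odd ((2 * n + 1) / i) ∧
      lres ((HahnSeries.single (-(2 * (n : ℤ) + 1)) u : LaurentSeries F) *
        (1 + HahnSeries.single (i : ℤ) θ : LaurentSeries F)⁻¹ *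
        lderiv (1 + HahnSeries.single (i : ℤ) θ : LaurentSeries F)) =
        u * θ ^ ((2 * n + 1) / i)) := by
  have hi_pos : (0 : ℤ) < i := by exact_mod_cast hi
  have hsmul : (i : ℤ) • θ = if Even i then 0 else θ := by
    rw [zsmul_eq_mul, Int.cast_natCast, CharTwo.natCast_eq_ite]
    split_ifs <;> simp
  rw [lres_single_mul_inv_mul_lderiv, hsmul]
  rcases Nat.even_or_odd i with hi_even | hi_odd
  · rw [if_pos hi_even, mul_zero, zero_mul]
    exact ⟨fun _ => rfl, fun hdvd => absurd (hi_even.two_dvd.trans hdvd) (by omega)⟩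
  rw [if_neg (Nat.not_even_iff_odd.mpr hi_odd)]
  refine ⟨fun hndvd => ?_, fun ⟨q, hq⟩ => ?_⟩
  · rw [coeff_inv_one_add_single_eq_zero hi_pos, mul_zero]
    intro j hj
    exact hndvd ⟨j + 1, by rw [nsmul_eq_mul] at hj; lia⟩
  · have hq_odd : Odd q := (Nat.odd_mul.mp (hq ▸ odd_two_mul_add_one n)).2
    obtain ⟨p, rfl⟩ : ∃ p, q = p + 1 := ⟨q - 1, by have := hq_odd.pos; omega⟩
    have hexp : 2 * (n : ℤ) + 1 - i = p • (i : ℤ) := by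
      rw [nsmul_eq_mul]
      linear_combination (by exact_mod_cast hq : 2 * (n : ℤ) + 1 = i * (p + 1))
    rw [hq, Nat.mul_div_cancel_left _ (by omega), hexp, coeff_inv_one_add_single_nsmul hi_pos,
      CharTwo.neg_eq, pow_succ']
    exact ⟨hq_odd, by ring⟩

/-- In `𝔽_q((t))` of characteristic 2, let `n ≥ 0`, `i ≥ 1`, `θ, u ∈ 𝔽_q` and
`α = 1 + θ tⁱ`. The coefficient of `t⁻¹` in `u t^{−(2n+1)} · α⁻¹ · dα/dt` is 0
if `i ∤ 2n+1`; and if `i ∣ 2n+1` then `(2n+1)/i` is odd and the coefficient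
equals `u · θ^{(2n+1)/i}`. -/
theorem stmt17 {F : Type*} [Field F] [Fintype F] (hF : CharP F 2)
    (n : ℕ) (i : ℕ) (hi : 1 ≤ i) (θ u : F) :
    (¬ (i ∣ 2 * n + 1) →
      lres ((HahnSeries.single (-(2 * (n : ℤ) + 1)) u : LaurentSeries F) *
        (1 + HahnSeries.single (i : ℤ) θ : LaurentSeries F)⁻¹ *
        lderiv (1 + HahnSeries.single (i : ℤ) θ : LaurentSeries F)) = 0) ∧
    ((i ∣ 2 * n + 1) →
      Odd ((2 * n + 1) / i) ∧
      lres ((HahnSeries.single (-(2 * (n : ℤ) + 1)) u : LaurentSeries F) *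
        (1 + HahnSeries.single (i : ℤ) θ : LaurentSeries F)⁻¹ *
        lderiv (1 + HahnSeries.single (i : ℤ) θ : LaurentSeries F)) =
        u * θ ^ ((2 * n + 1) / i)) :=
  stmt17_general hF n i hi θ u
end
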